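/- arXiv:1302.0815 — 5 statements merged into one kernel-verified Lean document; each statement's English description precedes it below -/
import Mathlib

section
/- Let H be a complex Hilbert space, A, B : H → H bounded linear operators with adjoint(A) = −A and adjoint(B) = −B, let u : ℝ → ℝ be continuous, and let ψ : ℝ → H be differentiable with derivative ψ′(t) = A(ψ(t)) + u(t) • B(ψ(t)) at every t. Then the energy function E(t) = Re⟨ψ(t), i • A(ψ(t))⟩ is differentiable at every t with derivative E′(t) = u(t) · Re⟨ψ(t), i • (A(B(ψ(t))) − B(A(ψ(t))))⟩. In particular, if u ≡ 0 then E is constant. -/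
/-!
Since `ψ' = M ψ` with `M = A + u • B` skew-adjoint, the expectation `⟪ψ, C ψ⟫` of any bounded
operator `C` evolves by the commutator: `d/dt ⟪ψ, C ψ⟫ = ⟪ψ, (C M - M C) ψ⟫`.
For `C = i • A` the `A`-part of `M` commutes with `C`, leaving `u • i • (A B - B A)`.
-/

open ContinuousLinearMap

theorem hasDerivAt_inner_apply_self {𝕜 E : Type*} [RCLike 𝕜] [NormedAddCommGroup E]
    [InnerProductSpace 𝕜 E] [NormedSpace ℝ E] [IsScalarTower ℝ 𝕜 E] {ψ : ℝ → E} {ψ' : E} {t : ℝ}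
    (C : E →L[𝕜] E) (hψ : HasDerivAt ψ ψ' t) :
    HasDerivAt (fun s => (inner 𝕜 (ψ s) (C (ψ s)) : 𝕜))
      (inner 𝕜 (ψ t) (C ψ') + inner 𝕜 ψ' (C (ψ t))) t :=
  hψ.inner 𝕜 (((C.restrictScalars ℝ).hasFDerivAt).comp_hasDerivAt t hψ)

section SkewAdjoint

variable {𝕜 E : Type*} [RCLike 𝕜] [NormedAddCommGroup E] [InnerProductSpace 𝕜 E]
  [CompleteSpace E] {M : E →L[𝕜] E}

theorem inner_apply_left_of_adjoint_eq_neg (hM : adjoint M = -M) (x y : E) :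
    (inner 𝕜 (M x) y : 𝕜) = -inner 𝕜 x (M y) := by
  rw [← adjoint_inner_right, hM, neg_apply, inner_neg_right]

theorem hasDerivAt_inner_apply_self_of_adjoint_eq_neg [NormedSpace ℝ E] [IsScalarTower ℝ 𝕜 E]
    {ψ : ℝ → E} {t : ℝ} (C : E →L[𝕜] E)
    (hM : adjoint M = -M) (hψ : HasDerivAt ψ (M (ψ t)) t) :
    HasDerivAt (fun s => (inner 𝕜 (ψ s) (C (ψ s)) : 𝕜))
      (inner 𝕜 (ψ t) (C (M (ψ t)) - M (C (ψ t)))) t := by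
  convert hasDerivAt_inner_apply_self C hψ using 1
  rw [inner_apply_left_of_adjoint_eq_neg hM, inner_sub_right, sub_eq_add_neg]

end SkewAdjoint

theorem smul_I_commutator_apply {H : Type*} [NormedAddCommGroup H] [InnerProductSpace ℂ H]
    (A B : H →L[ℂ] H) (c : ℝ) (x : H) :
    Complex.I • A (A x + c • B x) - (A (Complex.I • A x) + c • B (Complex.I • A x))
      = c • Complex.I • (A (B x) - B (A x)) := by
  simp only [map_add, map_smul, map_smul_of_tower]
  module

theorem energy_evolution_bilinear_schrodinger_general
    {H : Type*} [NormedAddCommGroup H] [InnerProductSpace ℂ H] [CompleteSpace H]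
    (A B : H →L[ℂ] H)
    (hA : ContinuousLinearMap.adjoint A = -A)
    (hB : ContinuousLinearMap.adjoint B = -B)
    (u : ℝ → ℝ)
    (ψ : ℝ → H)
    (hψ : ∀ t : ℝ, HasDerivAt ψ (A (ψ t) + u t • B (ψ t)) t) :
    (∀ t : ℝ,
      HasDerivAt (fun s => (inner ℂ (ψ s) (Complex.I • A (ψ s)) : ℂ).re)
        (u t * (inner ℂ (ψ t) (Complex.I • (A (B (ψ t)) - B (A (ψ t)))) : ℂ).re) t) ∧
    ((∀ t : ℝ, u t = 0) → ∀ s t : ℝ,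
      (inner ℂ (ψ s) (Complex.I • A (ψ s)) : ℂ).re
        = (inner ℂ (ψ t) (Complex.I • A (ψ t)) : ℂ).re) := by
  have hderiv (t : ℝ) :
      HasDerivAt (fun s => (inner ℂ (ψ s) (Complex.I • A (ψ s)) : ℂ).re)
        (u t * (inner ℂ (ψ t) (Complex.I • (A (B (ψ t)) - B (A (ψ t)))) : ℂ).re) t := by
    have hM : adjoint (A + u t • B) = -(A + u t • B) := by
      rw [map_add, ← Complex.coe_smul, map_smulₛₗ, Complex.conj_ofReal, hA, hB, smul_neg, neg_add]
    have hψM : HasDerivAt ψ ((A + u t • B) (ψ t)) t := hψ t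
    refine (Complex.reCLM.hasFDerivAt.comp_hasDerivAt t
      (hasDerivAt_inner_apply_self_of_adjoint_eq_neg (Complex.I • A) hM hψM)).congr_deriv ?_
    simp only [Complex.reCLM_apply, add_apply, smul_apply]
    rw [smul_I_commutator_apply, ← Complex.coe_smul, inner_smul_right, Complex.re_ofReal_mul]
  refine ⟨hderiv, fun hu s t => is_const_of_deriv_eq_zero
    (fun r => (hderiv r).differentiableAt) (fun r => ?_) s t⟩
  simpa [hu r] using (hderiv r).deriv

/-- Evolution of the energy `E(t) = Re⟪ψ(t), i • A ψ(t)⟫` along solutions of the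
bilinear Schrödinger equation with bounded skew-adjoint operators:
`E'(t) = u(t) · Re⟪ψ(t), i • (AB − BA) ψ(t)⟫`; in particular the energy is
constant when the control vanishes. -/
theorem energy_evolution_bilinear_schrodinger
    {H : Type*} [NormedAddCommGroup H] [InnerProductSpace ℂ H] [CompleteSpace H]
    (A B : H →L[ℂ] H)
    (hA : ContinuousLinearMap.adjoint A = -A)
    (hB : ContinuousLinearMap.adjoint B = -B)
    (u : ℝ → ℝ) (hu : Continuous u)
    (ψ : ℝ → H)
    (hψ : ∀ t : ℝ, HasDerivAt ψ (A (ψ t) + u t • B (ψ t)) t) :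
    (∀ t : ℝ,
      HasDerivAt (fun s => (inner ℂ (ψ s) (Complex.I • A (ψ s)) : ℂ).re)
        (u t * (inner ℂ (ψ t) (Complex.I • (A (B (ψ t)) - B (A (ψ t)))) : ℂ).re) t) ∧
    ((∀ t : ℝ, u t = 0) → ∀ s t : ℝ,
      (inner ℂ (ψ s) (Complex.I • A (ψ s)) : ℂ).re
        = (inner ℂ (ψ t) (Complex.I • A (ψ t)) : ℂ).re) :=
  energy_evolution_bilinear_schrodinger_general A B hA hB u ψ hψ
end

section
/- Let H be a complex Hilbert space, A, B : H → H bounded linear operators with adjoint(A) = −A and adjoint(B) = −B, let φ ∈ H and λ ∈ ℝ satisfy A(φ) = (−iλ) • φ, let T > 0, let u : ℝ → ℝ be integrable on [0,T], and let ψ : ℝ → H be continuous with ‖ψ(0)‖ ≤ 1 and ψ(t) = ψ(0) + ∫₀ᵗ (A(ψ(s)) + u(s) • B(ψ(s))) ds for all t ∈ [0,T]. Then | |⟨φ, ψ(T)⟩| − |⟨φ, ψ(0)⟩| | ≤ ‖B(φ)‖ · ∫₀ᵀ |u(t)| dt. Equivalently, the L¹-norm of any control steering the eigenstate-overlap of the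 system is bounded below: ∫₀ᵀ |u| ≥ ( | |⟨φ, ψ(0)⟩| − |⟨φ, ψ(T)⟩| | ) / ‖B(φ)‖ whenever B(φ) ≠ 0. -/
/-!
Since `A` and `B` are skew-adjoint, `Re ⟪ψ, (A + u B) ψ⟫ = 0`, so `‖ψ‖` is conserved and stays
`≤ 1`. Since `A† φ = -A φ = iλ φ`, the overlap `f = ⟪φ, ψ⟫` solves
`f' = -iλ f + u ⟪φ, B ψ⟫`, and variation of constants gives
`e^{iλT} f(T) - f(0) = ∫₀ᵀ e^{iλs} u(s) ⟪φ, B ψ(s)⟫ ds`, where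
`|⟪φ, B ψ⟫| = |⟪B φ, ψ⟫| ≤ ‖B φ‖`. The control is only integrable, so `ψ` is merely absolutely
continuous; both computations use a product rule for primitives of integrable functions,
proved by Fubini on a triangle.
-/

open MeasureTheory intervalIntegral Set Function

section ProductRule

variable {E F G : Type*} [NormedAddCommGroup E] [NormedSpace ℝ E]
  [NormedAddCommGroup F] [NormedSpace ℝ F] [NormedAddCommGroup G] [NormedSpace ℝ G]
  {a b : ℝ}

theorem ContinuousLinearMap.intervalIntegrable_apply₂_of_continuousOn_right
    (L : E →L[ℝ] F →L[ℝ] G) {f : ℝ → E} {g : ℝ → F}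
    (hf : IntervalIntegrable f volume a b) (hg : ContinuousOn g (uIcc a b)) :
    IntervalIntegrable (fun s => L (f s) (g s)) volume a b := by
  obtain ⟨C, hC⟩ := isCompact_uIcc.exists_bound_of_continuousOn hg
  rw [intervalIntegrable_iff] at hf ⊢
  exact L.integrable_of_bilin_of_bdd_right C hf
    ((hg.mono uIoc_subset_uIcc).aestronglyMeasurable measurableSet_uIoc)
    (ae_restrict_of_forall_mem measurableSet_uIoc fun s hs => hC s (uIoc_subset_uIcc hs))

theorem intervalIntegral_intervalIntegral_triangle_swap {k : ℝ → ℝ → G} (hab : a ≤ b)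
    (hk : IntegrableOn (uncurry k) (Ioc a b ×ˢ Ioc a b)) :
    ∫ s in a..b, ∫ r in a..s, k s r = ∫ r in a..b, ∫ s in r..b, k s r := by
  set K : ℝ → ℝ → G := fun s r => indicator (Iio s) (k s) r
  have hK : IntegrableOn (uncurry K) (uIoc a b ×ˢ uIoc a b) := by
    have : uncurry K = indicator {p : ℝ × ℝ | p.2 < p.1} (uncurry k) := by
      ext p; simp [K, indicator_apply, uncurry]
    rw [uIoc_of_le hab, this]
    exact hk.indicator (measurableSet_lt measurable_snd measurable_fst)
  calc ∫ s in a..b, ∫ r in a..s, k s r = ∫ s in a..b, ∫ r in a..b, K s r := by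
        refine integral_congr fun s hs => ?_
        rw [uIcc_of_le hab] at hs
        rw [integral_of_le hab, integral_of_le hs.1,
          MeasureTheory.integral_indicator measurableSet_Iio,
          Measure.restrict_restrict measurableSet_Iio, integral_Ioc_eq_integral_Ioo]
        congr 2
        ext x
        simp only [mem_inter_iff, mem_Iio, mem_Ioc, mem_Ioo]
        exact ⟨fun h => ⟨h.2, h.1, h.2.le.trans hs.2⟩, fun h => ⟨h.2.1, h.1⟩⟩
    _ = ∫ r in a..b, ∫ s in a..b, K s r := intervalIntegral_intervalIntegral_swap hK
    _ = ∫ r in a..b, ∫ s in r..b, k s r := by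
        refine integral_congr fun r hr => ?_
        rw [uIcc_of_le hab] at hr
        have : ∀ s, K s r = indicator (Ioi r) (fun s => k s r) s := fun s => by
          simp [K, indicator_apply]
        simp_rw [this]
        rw [integral_of_le hab, integral_of_le hr.2,
          MeasureTheory.integral_indicator measurableSet_Ioi,
          Measure.restrict_restrict measurableSet_Ioi, inter_comm, Ioc_inter_Ioi, max_eq_right hr.1]

variable [CompleteSpace E] [CompleteSpace F] [CompleteSpace G]

theorem ContinuousLinearMap.intervalIntegral_apply_primitive_swap (L : E →L[ℝ] F →L[ℝ] G)
    {f : ℝ → E} {g : ℝ → F} (hab : a ≤ b) (hf : IntervalIntegrable f volume a b)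
    (hg : IntervalIntegrable g volume a b) :
    ∫ s in a..b, L (∫ r in a..s, f r) (g s) = ∫ r in a..b, L (f r) (∫ s in r..b, g s) := by
  have hk : IntegrableOn (uncurry fun s r => L (f r) (g s)) (Ioc a b ×ˢ Ioc a b) := by
    rw [intervalIntegrable_iff_integrableOn_Ioc_of_le hab] at hf hg
    rw [IntegrableOn, Measure.volume_eq_prod, ← Measure.prod_restrict]
    exact hg.op_fst_snd (op := fun y x => L x y) (by fun_prop)
      ⟨‖L‖, fun y x => by simpa [mul_right_comm] using L.le_opNorm₂ x y⟩ hf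
  calc ∫ s in a..b, L (∫ r in a..s, f r) (g s) = ∫ s in a..b, ∫ r in a..s, L (f r) (g s) := by
        refine integral_congr fun s hs => ((L.flip (g s)).intervalIntegral_comp_comm ?_).symm
        exact hf.mono_set (uIcc_subset_uIcc_left hs)
    _ = ∫ r in a..b, ∫ s in r..b, L (f r) (g s) :=
        intervalIntegral_intervalIntegral_triangle_swap hab hk
    _ = ∫ r in a..b, L (f r) (∫ s in r..b, g s) := by
        refine integral_congr fun r hr => (L (f r)).intervalIntegral_comp_comm ?_
        exact hg.mono_set (uIcc_subset_uIcc_right hr)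

theorem ContinuousLinearMap.apply_eq_add_integral_of_eq_add_integral (L : E →L[ℝ] F →L[ℝ] G)
    {f f' : ℝ → E} {g g' : ℝ → F} (hab : a ≤ b)
    (hf' : IntervalIntegrable f' volume a b) (hg' : IntervalIntegrable g' volume a b)
    (hf : ∀ t ∈ Icc a b, f t = f a + ∫ s in a..t, f' s)
    (hg : ∀ t ∈ Icc a b, g t = g a + ∫ s in a..t, g' s) :
    L (f b) (g b) = L (f a) (g a) + ∫ s in a..b, (L (f' s) (g s) + L (f s) (g' s)) := by
  rw [← uIcc_of_le hab] at hf hg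
  have hf_cont : ContinuousOn f (uIcc a b) :=
    (continuousOn_const.add (continuousOn_primitive_interval' hf' left_mem_uIcc)).congr hf
  have hg_cont : ContinuousOn g (uIcc a b) :=
    (continuousOn_const.add (continuousOn_primitive_interval' hg' left_mem_uIcc)).congr hg
  have hg_sub : ∀ t ∈ uIcc a b, g b - g t = ∫ s in t..b, g' s := fun t ht => by
    rw [hg b right_mem_uIcc, hg t ht, add_sub_add_left_eq_sub,
      integral_interval_sub_left hg' (hg'.mono_set (uIcc_subset_uIcc_left ht))]
  have hswap : ∫ s in a..b, L (f s - f a) (g' s) = ∫ s in a..b, L (f' s) (g b - g s) := by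
    calc ∫ s in a..b, L (f s - f a) (g' s) = ∫ s in a..b, L (∫ r in a..s, f' r) (g' s) :=
          integral_congr fun s hs => by rw [hf s hs, add_sub_cancel_left]
      _ = ∫ r in a..b, L (f' r) (∫ s in r..b, g' s) :=
          L.intervalIntegral_apply_primitive_swap hab hf' hg'
      _ = ∫ s in a..b, L (f' s) (g b - g s) := integral_congr fun s hs => by rw [hg_sub s hs]
  have h₁ : IntervalIntegrable (fun s => L (f' s) (g b)) volume a b :=
    L.intervalIntegrable_apply₂_of_continuousOn_right hf' continuousOn_const
  have h₂ : IntervalIntegrable (fun s => L (f a) (g' s)) volume a b :=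
    ⟨(L (f a)).integrable_comp hg'.1, (L (f a)).integrable_comp hg'.2⟩
  have h₃ : IntervalIntegrable (fun s => L (f s - f a) (g' s)) volume a b := by
    simpa using
      L.flip.intervalIntegrable_apply₂_of_continuousOn_right hg' (hf_cont.sub continuousOn_const)
  have h₄ : IntervalIntegrable (fun s => L (f' s) (g b - g s)) volume a b :=
    L.intervalIntegrable_apply₂_of_continuousOn_right hf' (continuousOn_const.sub hg_cont)
  calc L (f b) (g b) = L (f a) (g a) + (L (f b - f a) (g b) + L (f a) (g b - g a)) := by
        simp only [map_sub, sub_apply]; abel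
    _ = L (f a) (g a) + ((∫ s in a..b, L (f' s) (g b)) + (∫ s in a..b, L (f a) (g' s))
          + ((∫ s in a..b, L (f s - f a) (g' s)) - ∫ s in a..b, L (f' s) (g b - g s))) := by
        have hI₁ : ∫ s in a..b, L (f' s) (g b) = L (f b - f a) (g b) := by
          rw [hf b right_mem_uIcc, add_sub_cancel_left]
          exact (L.flip (g b)).intervalIntegral_comp_comm hf'
        rw [hswap, sub_self, add_zero, hI₁, (L (f a)).intervalIntegral_comp_comm hg',
          hg_sub a left_mem_uIcc]
    _ = L (f a) (g a) + ∫ s in a..b, (L (f' s) (g s) + L (f s) (g' s)) := by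
        rw [← integral_add h₁ h₂, ← integral_sub h₃ h₄, ← integral_add (h₁.add h₂) (h₃.sub h₄)]
        congr 1
        refine integral_congr fun s _ => ?_
        simp only [map_sub, sub_apply]
        abel

end ProductRule

theorem norm_eq_of_eq_add_integral_of_inner_eq_zero {H : Type*} [NormedAddCommGroup H]
    [InnerProductSpace ℝ H] [CompleteSpace H] {ψ ψ' : ℝ → H} {a b : ℝ} (hab : a ≤ b)
    (hψ' : IntervalIntegrable ψ' volume a b)
    (hψ : ∀ t ∈ Icc a b, ψ t = ψ a + ∫ s in a..t, ψ' s)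
    (horth : ∀ s ∈ Icc a b, inner ℝ (ψ s) (ψ' s) = 0) : ‖ψ b‖ = ‖ψ a‖ := by
  have hzero : ∫ s in a..b, (inner ℝ (ψ' s) (ψ s) + inner ℝ (ψ s) (ψ' s)) = 0 := by
    refine (integral_congr fun s hs => ?_).trans integral_zero
    rw [uIcc_of_le hab] at hs
    rw [real_inner_comm (ψ s), horth s hs, add_zero]
  have h := (innerSL ℝ).apply_eq_add_integral_of_eq_add_integral hab hψ' hψ' hψ hψ
  change inner ℝ (ψ b) (ψ b) = inner ℝ (ψ a) (ψ a)
    + ∫ s in a..b, (inner ℝ (ψ' s) (ψ s) + inner ℝ (ψ s) (ψ' s)) at h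
  rw [hzero, add_zero, real_inner_self_eq_norm_sq, real_inner_self_eq_norm_sq] at h
  exact (sq_eq_sq₀ (norm_nonneg _) (norm_nonneg _)).1 h

open Complex in
theorem abs_norm_sub_norm_le_integral_of_eq_add_integral {f v : ℝ → ℂ} {lam a b : ℝ}
    (hab : a ≤ b) (hf_cont : ContinuousOn f (Icc a b)) (hv : IntervalIntegrable v volume a b)
    (hf : ∀ t ∈ Icc a b, f t = f a + ∫ s in a..t, (-(I * lam) * f s + v s)) :
    |‖f b‖ - ‖f a‖| ≤ ∫ s in a..b, ‖v s‖ := by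
  set e : ℝ → ℂ := fun s => exp (I * lam * s)
  have he_deriv : ∀ s, HasDerivAt e (I * lam * e s) s := fun s => by
    simpa [e, mul_comm] using ((hasDerivAt_id s).ofReal_comp.const_mul (I * lam)).cexp
  have he_cont : Continuous e := by fun_prop
  have he_norm : ∀ s, ‖e s‖ = 1 := fun s => by simp [e, norm_exp]
  have he : ∀ t ∈ Icc a b, e t = e a + ∫ s in a..t, I * lam * e s := fun t _ => by
    rw [integral_eq_sub_of_hasDerivAt (fun s _ => he_deriv s)
      ((continuous_const.mul he_cont).intervalIntegrable a t), add_sub_cancel]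
  have hf' : IntervalIntegrable (fun s => -(I * lam) * f s + v s) volume a b := by
    refine IntervalIntegrable.add ?_ hv
    exact (continuousOn_const.mul (hf_cont.mono (uIcc_of_le hab).subset)).intervalIntegrable
  have hprod := (ContinuousLinearMap.mul ℝ ℂ).apply_eq_add_integral_of_eq_add_integral hab
    ((continuous_const.mul he_cont).intervalIntegrable a b) hf' he hf
  have hvar : e b * f b - e a * f a = ∫ s in a..b, e s * v s := by
    simp only [ContinuousLinearMap.mul_apply', Pi.mul_apply] at hprod
    rw [hprod, add_sub_cancel_left]
    exact integral_congr fun s _ => by ring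
  calc |‖f b‖ - ‖f a‖| = |‖e b * f b‖ - ‖e a * f a‖| := by
        simp only [norm_mul, he_norm, one_mul]
    _ ≤ ‖e b * f b - e a * f a‖ := abs_norm_sub_norm_le _ _
    _ = ‖∫ s in a..b, e s * v s‖ := by rw [hvar]
    _ ≤ ∫ s in a..b, ‖e s * v s‖ := norm_integral_le_integral_norm hab
    _ = ∫ s in a..b, ‖v s‖ := by simp only [norm_mul, he_norm, one_mul]

theorem ContinuousLinearMap.re_inner_apply_self_eq_zero_of_adjoint_eq_neg {𝕜 E : Type*}
    [RCLike 𝕜] [NormedAddCommGroup E] [InnerProductSpace 𝕜 E] [CompleteSpace E] {A : E →L[𝕜] E}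
    (hA : ContinuousLinearMap.adjoint A = -A) (x : E) : RCLike.re (inner 𝕜 x (A x)) = 0 := by
  have h := A.adjoint_inner_right x x
  rw [hA, neg_apply, inner_neg_right] at h
  have h' := congrArg RCLike.re h
  rw [map_neg, inner_re_symm (A x) x] at h'
  linarith

theorem ContinuousLinearMap.norm_inner_apply_le_of_adjoint_eq_neg {𝕜 E : Type*} [RCLike 𝕜]
    [NormedAddCommGroup E] [InnerProductSpace 𝕜 E] [CompleteSpace E] {B : E →L[𝕜] E}
    (hB : ContinuousLinearMap.adjoint B = -B) (φ x : E) :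
    ‖inner 𝕜 φ (B x)‖ ≤ ‖B φ‖ * ‖x‖ := by
  rw [← B.adjoint_inner_left, hB, neg_apply, inner_neg_left, norm_neg]
  exact norm_inner_le_norm _ _

section Schrodinger

variable {H : Type*} [NormedAddCommGroup H] [InnerProductSpace ℂ H]
  {A B : H →L[ℂ] H} {u : ℝ → ℝ} {ψ : ℝ → H} {T t : ℝ}

theorem intervalIntegrable_apply_add_smul_apply (A B : H →L[ℂ] H)
    (hu : IntervalIntegrable u volume 0 T) (hψ_cont : Continuous ψ) (ht : t ∈ Icc 0 T) :
    IntervalIntegrable (fun s => A (ψ s) + u s • B (ψ s)) volume 0 t :=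
  ((A.continuous.comp hψ_cont).intervalIntegrable 0 t).add <|
    (ContinuousLinearMap.lsmul ℝ ℝ).intervalIntegrable_apply₂_of_continuousOn_right
      (hu.mono_set (uIcc_subset_uIcc_left (Icc_subset_uIcc ht)))
      (B.continuous.comp hψ_cont).continuousOn

variable [CompleteSpace H]

theorem norm_eq_of_eq_add_integral_apply_add_smul_apply
    (hA : ContinuousLinearMap.adjoint A = -A) (hB : ContinuousLinearMap.adjoint B = -B)
    (hu : IntervalIntegrable u volume 0 T) (hψ_cont : Continuous ψ)
    (hψ : ∀ t ∈ Icc 0 T, ψ t = ψ 0 + ∫ s in 0..t, (A (ψ s) + u s • B (ψ s)))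
    (ht : t ∈ Icc 0 T) : ‖ψ t‖ = ‖ψ 0‖ := by
  let := InnerProductSpace.complexToReal (G := H)
  refine norm_eq_of_eq_add_integral_of_inner_eq_zero ht.1
    (intervalIntegrable_apply_add_smul_apply A B hu hψ_cont ht)
    (fun t' ht' => hψ t' ⟨ht'.1, ht'.2.trans ht.2⟩) fun s _ => ?_
  rw [inner_add_right, real_inner_smul_right, real_inner_eq_re_inner ℂ,
    real_inner_eq_re_inner ℂ, A.re_inner_apply_self_eq_zero_of_adjoint_eq_neg hA,
    B.re_inner_apply_self_eq_zero_of_adjoint_eq_neg hB, mul_zero, add_zero]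

open Complex in
theorem inner_eq_add_integral_of_eq_add_integral_apply_add_smul_apply
    (hA : ContinuousLinearMap.adjoint A = -A) {φ : H} {lam : ℝ}
    (hφ : A φ = (-(I * (lam : ℂ))) • φ) (hu : IntervalIntegrable u volume 0 T)
    (hψ_cont : Continuous ψ)
    (hψ : ∀ t ∈ Icc 0 T, ψ t = ψ 0 + ∫ s in 0..t, (A (ψ s) + u s • B (ψ s)))
    (t : ℝ) (ht : t ∈ Icc 0 T) :
    inner ℂ φ (ψ t) = inner ℂ φ (ψ 0)
      + ∫ s in 0..t, (-(I * lam) * inner ℂ φ (ψ s) + u s • inner ℂ φ (B (ψ s))) := by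
  have hA_φ : ∀ x, inner ℂ φ (A x) = -(I * lam) * inner ℂ φ x := fun x => by
    rw [← A.adjoint_inner_left, hA, neg_apply, hφ, neg_smul, neg_neg, inner_smul_left]
    simp
  rw [hψ t ht, inner_add_right]
  congr 1
  refine ((innerSL ℂ φ).intervalIntegral_comp_comm
    (intervalIntegrable_apply_add_smul_apply A B hu hψ_cont ht)).symm.trans
    (integral_congr fun s _ => ?_)
  change inner ℂ φ (A (ψ s) + u s • B (ψ s)) = _
  rw [inner_add_right, hA_φ, inner_smul_right_eq_smul]

end Schrodinger

/-- The variation of the modulus of the overlap of a solution of the bilinear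
Schrödinger equation with an eigenvector `φ` of `A` is bounded by the `L¹` norm
of the control times `‖Bφ‖`; equivalently the `L¹` norm of a control steering
the eigenstate-overlap is bounded below. -/
theorem overlap_variation_le_L1_norm
    {H : Type*} [NormedAddCommGroup H] [InnerProductSpace ℂ H] [CompleteSpace H]
    (A B : H →L[ℂ] H)
    (hA : ContinuousLinearMap.adjoint A = -A)
    (hB : ContinuousLinearMap.adjoint B = -B)
    (φ : H) (lam : ℝ) (hφ : A φ = (-(Complex.I * (lam : ℂ))) • φ)
    (T : ℝ) (hT : 0 < T)
    (u : ℝ → ℝ) (hu : IntegrableOn u (Set.Icc 0 T))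
    (ψ : ℝ → H) (hψ_cont : Continuous ψ) (hψ0 : ‖ψ 0‖ ≤ 1)
    (hψ : ∀ t ∈ Set.Icc (0 : ℝ) T,
      ψ t = ψ 0 + ∫ s in (0 : ℝ)..t, (A (ψ s) + u s • B (ψ s))) :
    (|‖inner ℂ φ (ψ T)‖ - ‖inner ℂ φ (ψ 0)‖|
      ≤ ‖B φ‖ * ∫ t in (0 : ℝ)..T, |u t|) ∧
    (B φ ≠ 0 →
      (|‖inner ℂ φ (ψ 0)‖ - ‖inner ℂ φ (ψ T)‖|) / ‖B φ‖
        ≤ ∫ t in (0 : ℝ)..T, |u t|) := by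
  have hu' : IntervalIntegrable u volume 0 T :=
    (intervalIntegrable_iff_integrableOn_Icc_of_le hT.le).2 hu
  have hv : IntervalIntegrable (fun s => u s • inner ℂ φ (B (ψ s))) volume 0 T :=
    (ContinuousLinearMap.lsmul ℝ ℝ).intervalIntegrable_apply₂_of_continuousOn_right hu'
      (continuous_const.inner (B.continuous.comp hψ_cont)).continuousOn
  have hv_le : ∀ s ∈ Icc 0 T, ‖u s • inner ℂ φ (B (ψ s))‖ ≤ ‖B φ‖ * |u s| := fun s hs => by
    rw [norm_smul, Real.norm_eq_abs, mul_comm]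
    gcongr
    calc ‖inner ℂ φ (B (ψ s))‖ ≤ ‖B φ‖ * ‖ψ s‖ :=
          B.norm_inner_apply_le_of_adjoint_eq_neg hB φ (ψ s)
      _ ≤ ‖B φ‖ := by
        rw [norm_eq_of_eq_add_integral_apply_add_smul_apply hA hB hu' hψ_cont hψ hs]
        exact mul_le_of_le_one_right (norm_nonneg _) hψ0
  have hvar : |‖inner ℂ φ (ψ T)‖ - ‖inner ℂ φ (ψ 0)‖| ≤ ‖B φ‖ * ∫ t in (0 : ℝ)..T, |u t| :=
    calc _ ≤ ∫ s in (0 : ℝ)..T, ‖u s • inner ℂ φ (B (ψ s))‖ :=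
          abs_norm_sub_norm_le_integral_of_eq_add_integral (f := fun t => inner ℂ φ (ψ t))
            hT.le (continuous_const.inner hψ_cont).continuousOn hv
            (inner_eq_add_integral_of_eq_add_integral_apply_add_smul_apply hA hφ hu' hψ_cont hψ)
      _ ≤ ∫ s in (0 : ℝ)..T, ‖B φ‖ * |u s| :=
          integral_mono_on hT.le hv.norm (hu'.abs.const_mul _) hv_le
      _ = ‖B φ‖ * ∫ s in (0 : ℝ)..T, |u s| := integral_const_mul _ _
  refine ⟨hvar, fun hBφ => ?_⟩
  rw [abs_sub_comm, div_le_iff₀' (norm_pos_iff.2 hBφ)]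
  exact hvar
end

section
/- Let T > 0, let u : ℝ → ℝ be nonnegative and integrable on [0,T] with ∫₀ᵀ u(t) dt < π, and let f : ℝ → ℝ be differentiable on [0,T] with 0 ≤ f(t) ≤ 1 for all t ∈ [0,T], f(0) = 1, and |f′(t)| ≤ u(t) · √(f(t)·(1 − f(t))) for all t ∈ [0,T]. Then f(T) ≥ cos²( (∫₀ᵀ u(t) dt) / 2 ). -/
open MeasureTheory intervalIntegral Real Set Filter Topology

/-! Write `2f - 1 = cos θ`. The hypothesis on `f'` says `θ' ≤ u` wherever `θ = arccos (2f - 1)` is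
differentiable, so `θ(T) ≤ ∫₀ᵀ u ≤ π` and `f(T) = cos²(θ(T)/2) ≥ cos²((∫₀ᵀ u)/2)`. Since `arccos` is
not differentiable at `±1`, the argument is run on `c (2f - 1)` for `c < 1`, which satisfies the
same differential inequality, and then `c → 1`. -/

theorem arccos_sub_arccos_le_integral {y y' u : ℝ → ℝ} {a b : ℝ} (hab : a ≤ b)
    (hy : ∀ t ∈ Icc a b, HasDerivAt y (y' t) t) (hy_lt : ∀ t ∈ Icc a b, |y t| < 1)
    (hu : IntegrableOn u (Icc a b)) (hy'_le : ∀ t ∈ Ioo a b, -y' t ≤ u t * √(1 - y t ^ 2)) :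
    arccos (y b) - arccos (y a) ≤ ∫ t in a..b, u t := by
  have hderiv : ∀ t ∈ Icc a b,
      HasDerivAt (fun s => arccos (y s)) (-(1 / √(1 - y t ^ 2)) * y' t) t := fun t ht =>
    (hasDerivAt_arccos (abs_lt.1 (hy_lt t ht)).1.ne' (abs_lt.1 (hy_lt t ht)).2.ne).comp t (hy t ht)
  refine sub_le_integral_of_hasDeriv_right_of_le hab
    (fun t ht => (hderiv t ht).continuousAt.continuousWithinAt)
    (fun t ht => (hderiv t (Ioo_subset_Icc_self ht)).hasDerivWithinAt) hu fun t ht => ?_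
  have hpos : 0 < √(1 - y t ^ 2) :=
    sqrt_pos.2 (sub_pos.2 ((sq_lt_one_iff_abs_lt_one _).2 (hy_lt t (Ioo_subset_Icc_self ht))))
  rw [show -(1 / √(1 - y t ^ 2)) * y' t = -y' t / √(1 - y t ^ 2) by ring, div_le_iff₀ hpos]
  exact hy'_le t ht

theorem scaled_inversion_deriv_bound {f d u c : ℝ} (hc₀ : 0 ≤ c) (hc₁ : c ≤ 1) (hu : 0 ≤ u)
    (hd : |d| ≤ u * √(f * (1 - f))) : -(c * (2 * d)) ≤ u * √(1 - (c * (2 * f - 1)) ^ 2) :=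
  calc -(c * (2 * d)) ≤ 2 * |d| := by nlinarith [neg_abs_le d, abs_nonneg d]
    _ ≤ 2 * (u * √(f * (1 - f))) := by gcongr
    _ = u * √(1 - (2 * f - 1) ^ 2) := by
      rw [show 1 - (2 * f - 1) ^ 2 = 2 ^ 2 * (f * (1 - f)) by ring,
        sqrt_mul (by norm_num) (f * (1 - f)), sqrt_sq (by norm_num)]
      ring
    _ ≤ u * √(1 - (c * (2 * f - 1)) ^ 2) := by
      gcongr u * √?_
      nlinarith [sq_nonneg (2 * f - 1), mul_le_one₀ hc₁ hc₀ hc₁]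

theorem arccos_le_of_forall_mul_le {y K : ℝ}
    (h : ∀ c ∈ Ico (0 : ℝ) 1, arccos (c * y) ≤ K + arccos c) : arccos y ≤ K := by
  have hlhs : Tendsto (fun c => arccos (c * y)) (𝓝[<] 1) (𝓝 (arccos y)) :=
    ((by fun_prop : Continuous fun c => arccos (c * y)).tendsto' 1 _ (by simp)).mono_left
      nhdsWithin_le_nhds
  have hrhs : Tendsto (fun c => K + arccos c) (𝓝[<] 1) (𝓝 K) :=
    ((by fun_prop : Continuous fun c => K + arccos c).tendsto' 1 _ (by simp)).mono_left
      nhdsWithin_le_nhds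
  exact le_of_tendsto_of_tendsto hlhs hrhs
    (eventually_of_mem (Ico_mem_nhdsLT zero_lt_one) h)

theorem cos_half_sq_le_of_arccos_le {x K : ℝ} (hx₀ : 0 ≤ x) (hx₁ : x ≤ 1) (hK : K ≤ π)
    (h : arccos (2 * x - 1) ≤ K) : cos (K / 2) ^ 2 ≤ x := by
  have hcos := cos_le_cos_of_nonneg_of_le_pi (arccos_nonneg _) hK h
  rw [cos_arccos (by linarith) (by linarith)] at hcos
  rw [cos_sq, show 2 * (K / 2) = K by ring]
  linarith

/-- Gronwall-type comparison lemma bounding population transfer: if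
`|f'| ≤ u √(f(1−f))`, `f(0) = 1` and `∫₀ᵀ u < π`, then
`f(T) ≥ cos²((∫₀ᵀ u)/2)`. -/
theorem population_comparison_lemma
    (T : ℝ) (hT : 0 < T)
    (u : ℝ → ℝ) (hu_nonneg : ∀ t ∈ Set.Icc (0 : ℝ) T, 0 ≤ u t)
    (hu_int : IntegrableOn u (Set.Icc 0 T))
    (hu_pi : (∫ t in (0 : ℝ)..T, u t) < π)
    (f f' : ℝ → ℝ)
    (hf_deriv : ∀ t ∈ Set.Icc (0 : ℝ) T, HasDerivAt f (f' t) t)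
    (hf_mem : ∀ t ∈ Set.Icc (0 : ℝ) T, 0 ≤ f t ∧ f t ≤ 1)
    (hf0 : f 0 = 1)
    (hf'_le : ∀ t ∈ Set.Icc (0 : ℝ) T, |f' t| ≤ u t * Real.sqrt (f t * (1 - f t))) :
    Real.cos ((∫ t in (0 : ℝ)..T, u t) / 2) ^ 2 ≤ f T := by
  have hfT := hf_mem T (right_mem_Icc.2 hT.le)
  have hK : arccos (2 * f T - 1) ≤ ∫ t in (0 : ℝ)..T, u t := by
    refine arccos_le_of_forall_mul_le fun c hc => ?_
    have hinv_lt : ∀ t ∈ Icc 0 T, |c * (2 * f t - 1)| < 1 := fun t ht => by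
      have hft := hf_mem t ht
      exact abs_lt.2 ⟨by nlinarith [hc.1, hc.2, hft.1], by nlinarith [hc.1, hc.2, hft.2]⟩
    have hθ := arccos_sub_arccos_le_integral (y := fun t => c * (2 * f t - 1))
      (y' := fun t => c * (2 * f' t)) hT.le
      (fun t ht => (((hf_deriv t ht).const_mul 2).sub_const 1).const_mul c) hinv_lt hu_int
      fun t ht => scaled_inversion_deriv_bound hc.1 hc.2.le (hu_nonneg t (Ioo_subset_Icc_self ht))
        (hf'_le t (Ioo_subset_Icc_self ht))
    norm_num [hf0] at hθ
    linarith
  exact cos_half_sq_le_of_arccos_le hfT.1 hfT.2 hu_pi.le hK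
end

section
/- Let T > 0, let u : ℝ → ℝ be integrable on [0,T] with ∫₀ᵀ |u(t)| dt < π, and let x₁, x₂ : ℝ → ℂ be continuous functions satisfying, for all t ∈ [0,T], x₁(t) = x₁(0) + ∫₀ᵗ (−i·x₁(s) − (i/2)·u(s)·x₂(s)) ds and x₂(t) = x₂(0) + ∫₀ᵗ (−4i·x₂(s) − (i/2)·u(s)·x₁(s)) ds, with initial condition x₁(0) = 1, x₂(0) = 0. Then |x₁(T)| ≥ cos( (∫₀ᵀ |u|) / 2 ) and |x₂(T)| ≤ sin( (∫₀ᵀ |u|) / 2 ). -/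
/-!
Put `φ t = ∫₀ᵗ |v|` with `v = u / 2`. The dynamics is unitary, so `‖x₁‖² + ‖x₂‖² = 1`, and in
the interaction picture `e^{i E_j t} x_j` the free evolution drops out: over `[s, t]` each modulus
moves by at most `φ t - φ s` times the other one, up to `O((φ t - φ s)²)`. Writing
`(‖x₁‖, ‖x₂‖) = (cos α, sin α)`, the quantity `sin (α - φ) = ‖x₂‖ cos φ - ‖x₁‖ sin φ` therefore
grows by at most `O((φ t - φ s)²)` on every subinterval, and such a function cannot increase: cut
`[0, T]` into `n` pieces of equal `φ`-increment and let `n → ∞`. Since `u` is merely integrable,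
the same principle also stands in for the product rule of calculus.
-/

open MeasureTheory intervalIntegral Real Set Filter Topology

theorem le_of_forall_sub_le_mul_sq {F φ : ℝ → ℝ} {a b C : ℝ} (hab : a ≤ b)
    (hφ : ContinuousOn φ (Icc a b))
    (hF : ∀ s ∈ Icc a b, ∀ t ∈ Icc s b, F t - F s ≤ C * (φ t - φ s) ^ 2) :
    F b ≤ F a := by
  have partition (n : ℕ) (hn : n ≠ 0) : ∀ k ≤ n, ∃ t ∈ Icc a b,
      φ t = φ a + k * ((φ b - φ a) / n) ∧ F t ≤ F a + k * (C * ((φ b - φ a) / n) ^ 2) := by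
    set d := (φ b - φ a) / n
    have hb : φ b = φ a + n * d := by
      rw [mul_div_cancel₀ _ (Nat.cast_ne_zero.2 hn)]; ring
    intro k hk
    induction k with
    | zero => exact ⟨a, ⟨le_rfl, hab⟩, by simp, by simp⟩
    | succ k ih =>
      obtain ⟨t, ht, hφt, hFt⟩ := ih (by omega)
      have hkn : (k : ℝ) + 1 ≤ n := by exact_mod_cast hk
      have hlevel : φ a + (k + 1) * d ∈ uIcc (φ t) (φ b) := by
        rw [mem_uIcc, hφt, hb]
        rcases le_total 0 d with hd | hd
        · exact Or.inl ⟨by nlinarith, by nlinarith⟩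
        · exact Or.inr ⟨by nlinarith, by nlinarith⟩
      obtain ⟨t', ht', hφt'⟩ := intermediate_value_uIcc
        (hφ.mono (uIcc_subset_Icc ht ⟨hab, le_rfl⟩)) hlevel
      rw [uIcc_of_le ht.2] at ht'
      refine ⟨t', ⟨ht.1.trans ht'.1, ht'.2⟩, by push_cast; linarith, ?_⟩
      have hstep := hF t ht t' ht'
      rw [hφt', hφt] at hstep
      push_cast
      nlinarith
  have bound (n : ℕ) (hn : n ≠ 0) : F b ≤ F a + C * (φ b - φ a) ^ 2 / n := by
    obtain ⟨t, ht, hφt, hFt⟩ := partition n hn n le_rfl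
    have hnd : (n : ℝ) * ((φ b - φ a) / n) = φ b - φ a :=
      mul_div_cancel₀ _ (Nat.cast_ne_zero.2 hn)
    have hend := hF t ht b ⟨ht.2, le_rfl⟩
    rw [hφt, hnd, show φ b - (φ a + (φ b - φ a)) = 0 by ring] at hend
    have hsum : (n : ℝ) * (C * ((φ b - φ a) / n) ^ 2) = C * (φ b - φ a) ^ 2 / n := by
      field_simp
    linarith
  have hlim : Tendsto (fun n : ℕ => F a + C * (φ b - φ a) ^ 2 / n) atTop (𝓝 (F a)) := by
    simpa using tendsto_const_nhds.add (tendsto_const_div_atTop_nhds_zero_nat (C * (φ b - φ a) ^ 2))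
  exact ge_of_tendsto hlim (eventually_ne_atTop 0 |>.mono bound)

theorem eq_of_forall_norm_sub_le_mul_sq {E : Type*} [NormedAddCommGroup E] {H : ℝ → E}
    {φ : ℝ → ℝ} {a b C : ℝ} (hab : a ≤ b) (hφ : ContinuousOn φ (Icc a b))
    (hH : ∀ s ∈ Icc a b, ∀ t ∈ Icc s b, ‖H t - H s‖ ≤ C * (φ t - φ s) ^ 2) :
    H b = H a := by
  have h := le_of_forall_sub_le_mul_sq (F := fun t => ‖H t - H a‖) hab hφ fun s hs t ht =>
    (norm_sub_norm_le _ _).trans_eq (by rw [sub_sub_sub_cancel_right]) |>.trans (hH s hs t ht)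
  simpa [sub_eq_zero] using h

theorem MeasureTheory.IntegrableOn.intervalIntegrable_of_mem_Icc {E : Type*}
    [NormedAddCommGroup E] {f : ℝ → E} {a b s t : ℝ} (hf : IntegrableOn f (Icc a b))
    (hs : s ∈ Icc a b) (ht : t ∈ Icc a b) : IntervalIntegrable f volume s t :=
  (hf.mono_set (uIcc_subset_Icc hs ht)).intervalIntegrable

def IsPrimitiveOn {E : Type*} [NormedAddCommGroup E] [NormedSpace ℝ E] (F f : ℝ → E)
    (a b : ℝ) : Prop :=
  ∀ t ∈ Icc a b, F t = F a + ∫ s in a..t, f s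

namespace IsPrimitiveOn

section NormedSpace

variable {E : Type*} [NormedAddCommGroup E] [NormedSpace ℝ E] {F f : ℝ → E} {a b : ℝ}

theorem sub_eq (hF : IsPrimitiveOn F f a b) (hf : IntegrableOn f (Icc a b)) {s t : ℝ}
    (hs : s ∈ Icc a b) (ht : t ∈ Icc a b) : F t - F s = ∫ r in s..t, f r := by
  have ha : a ∈ Icc a b := left_mem_Icc.2 (hs.1.trans hs.2)
  rw [hF t ht, hF s hs, add_sub_add_left_eq_sub, integral_interval_sub_left
    (hf.intervalIntegrable_of_mem_Icc ha ht) (hf.intervalIntegrable_of_mem_Icc ha hs)]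

theorem norm_sub_le (hF : IsPrimitiveOn F f a b) (hf : IntegrableOn f (Icc a b)) {s t : ℝ}
    (hs : s ∈ Icc a b) (ht : t ∈ Icc s b) : ‖F t - F s‖ ≤ ∫ r in s..t, ‖f r‖ := by
  rw [hF.sub_eq hf hs ⟨hs.1.trans ht.1, ht.2⟩]
  exact norm_integral_le_integral_norm ht.1

theorem norm_sub_le_of_subset (hF : IsPrimitiveOn F f a b) (hf : IntegrableOn f (Icc a b))
    {s t r r' : ℝ} (hs : s ∈ Icc a b) (ht : t ∈ Icc s b) (hr : r ∈ Icc s t) (hr' : r' ∈ Icc r t) :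
    ‖F r' - F r‖ ≤ ∫ x in s..t, ‖f x‖ := by
  refine (hF.norm_sub_le hf ⟨hs.1.trans hr.1, hr.2.trans ht.2⟩ ⟨hr'.1, hr'.2.trans ht.2⟩).trans
    (integral_mono_interval hr.1 hr'.1 hr'.2 (ae_of_all _ fun _ => norm_nonneg _) ?_)
  exact (hf.intervalIntegrable_of_mem_Icc hs ⟨hs.1.trans ht.1, ht.2⟩).norm

theorem congr {g : ℝ → E} (hF : IsPrimitiveOn F f a b) (hfg : ∀ t, f t = g t) :
    IsPrimitiveOn F g a b :=
  funext hfg ▸ hF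

theorem _root_.isPrimitiveOn_intervalIntegral (f : ℝ → E) (a b : ℝ) :
    IsPrimitiveOn (fun t => ∫ s in a..t, f s) f a b := fun _ _ => by
  simp only [integral_same, zero_add]

theorem continuousOn (hF : IsPrimitiveOn F f a b) (hf : IntegrableOn f (Icc a b)) :
    ContinuousOn F (Icc a b) := by
  rcases le_or_gt a b with hab | hba
  · rw [← uIcc_of_le hab] at hf ⊢
    exact (continuousOn_const.add (continuousOn_primitive_interval hf)).congr
      (by rwa [uIcc_of_le hab])
  · simp [Icc_eq_empty_of_lt hba]

theorem of_hasDerivAt [CompleteSpace E] (hF : ∀ x ∈ Icc a b, HasDerivAt F (f x) x)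
    (hf : IntegrableOn f (Icc a b)) : IsPrimitiveOn F f a b := fun t ht => by
  have hsub : uIcc a t ⊆ Icc a b := uIcc_subset_Icc (left_mem_Icc.2 (ht.1.trans ht.2)) ht
  rw [integral_eq_sub_of_hasDerivAt (fun x hx => hF x (hsub hx))
    (hf.mono_set hsub).intervalIntegrable, add_sub_cancel]

end NormedSpace

section RCLike

variable {𝕜 : Type*} [RCLike 𝕜] {F f G g : ℝ → 𝕜} {a b : ℝ}

theorem conj (hF : IsPrimitiveOn F f a b) :
    IsPrimitiveOn (fun t => starRingEnd 𝕜 (F t)) (fun t => starRingEnd 𝕜 (f t)) a b :=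
  fun t ht => by simp only [hF t ht, map_add, intervalIntegral_conj]

theorem mul_sub_mul_sub_integral_eq (hF : IsPrimitiveOn F f a b) (hG : IsPrimitiveOn G g a b)
    (hf : IntegrableOn f (Icc a b)) (hg : IntegrableOn g (Icc a b)) {s t : ℝ}
    (hs : s ∈ Icc a b) (ht : t ∈ Icc a b) :
    F t * G t - F s * G s - ∫ r in s..t, (F r * g r + f r * G r)
      = ∫ r in s..t, ((F s - F r) * g r + f r * (G t - G r)) := by
  have hFg : IntegrableOn (fun r => F r * g r) (Icc a b) :=
    hg.continuousOn_mul (hF.continuousOn hf) isCompact_Icc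
  have hfG : IntegrableOn (fun r => f r * G r) (Icc a b) :=
    hf.mul_continuousOn (hG.continuousOn hg) isCompact_Icc
  have hf' := hf.intervalIntegrable_of_mem_Icc hs ht
  have hg' := hg.intervalIntegrable_of_mem_Icc hs ht
  have hsplit : (fun r => (F s - F r) * g r + f r * (G t - G r))
      = fun r => (F s * g r + f r * G t) - (F r * g r + f r * G r) := by
    funext r; ring
  rw [hsplit, integral_sub ((hg'.const_mul _).add (hf'.mul_const _))
      ((hFg.intervalIntegrable_of_mem_Icc hs ht).add (hfG.intervalIntegrable_of_mem_Icc hs ht)),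
    integral_add (hg'.const_mul _) (hf'.mul_const _), intervalIntegral.integral_const_mul,
    intervalIntegral.integral_mul_const, ← hF.sub_eq hf hs ht, ← hG.sub_eq hg hs ht]
  ring

theorem norm_mul_sub_mul_sub_integral_le (hF : IsPrimitiveOn F f a b)
    (hG : IsPrimitiveOn G g a b) (hf : IntegrableOn f (Icc a b)) (hg : IntegrableOn g (Icc a b))
    {s t : ℝ} (hs : s ∈ Icc a b) (ht : t ∈ Icc s b) :
    ‖F t * G t - F s * G s - ∫ r in s..t, (F r * g r + f r * G r)‖
      ≤ 2 * ((∫ r in s..t, ‖f r‖) * ∫ r in s..t, ‖g r‖) := by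
  set Δf := ∫ r in s..t, ‖f r‖
  set Δg := ∫ r in s..t, ‖g r‖
  have ht' : t ∈ Icc a b := ⟨hs.1.trans ht.1, ht.2⟩
  have hnf := (hf.intervalIntegrable_of_mem_Icc hs ht').norm
  have hng := (hg.intervalIntegrable_of_mem_Icc hs ht').norm
  rw [hF.mul_sub_mul_sub_integral_eq hG hf hg hs ht']
  refine (norm_integral_le_of_norm_le ht.1 (g := fun r => Δf * ‖g r‖ + ‖f r‖ * Δg)
    (ae_of_all _ fun r hr => ?_) ((hng.const_mul _).add (hnf.mul_const _))).trans_eq ?_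
  · have hr : r ∈ Icc s t := Ioc_subset_Icc_self hr
    have hFr : ‖F s - F r‖ ≤ Δf := by
      rw [norm_sub_rev]; exact hF.norm_sub_le_of_subset hf hs ht (left_mem_Icc.2 ht.1) hr
    have hGr : ‖G t - G r‖ ≤ Δg :=
      hG.norm_sub_le_of_subset hg hs ht hr (right_mem_Icc.2 hr.2)
    calc ‖(F s - F r) * g r + f r * (G t - G r)‖
        ≤ ‖F s - F r‖ * ‖g r‖ + ‖f r‖ * ‖G t - G r‖ :=
          (norm_add_le _ _).trans (add_le_add (norm_mul_le _ _) (norm_mul_le _ _))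
      _ ≤ Δf * ‖g r‖ + ‖f r‖ * Δg := by gcongr
  · rw [integral_add (hng.const_mul _) (hnf.mul_const _), intervalIntegral.integral_const_mul,
      intervalIntegral.integral_mul_const]
    ring

theorem mul (hF : IsPrimitiveOn F f a b) (hG : IsPrimitiveOn G g a b)
    (hf : IntegrableOn f (Icc a b)) (hg : IntegrableOn g (Icc a b)) :
    IsPrimitiveOn (fun t => F t * G t) (fun t => F t * g t + f t * G t) a b := by
  intro t ht
  have hsub : Icc a t ⊆ Icc a b := Icc_subset_Icc_right ht.2
  have hfg : IntegrableOn (fun r => ‖f r‖ + ‖g r‖) (Icc a b) := hf.norm.add hg.norm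
  have hψ := isPrimitiveOn_intervalIntegral (fun r => ‖f r‖ + ‖g r‖) a b
  have hK := isPrimitiveOn_intervalIntegral (fun r => F r * g r + f r * G r) a b
  have hconst := eq_of_forall_norm_sub_le_mul_sq
    (H := fun τ => F τ * G τ - ∫ r in a..τ, (F r * g r + f r * G r)) (C := 1) ht.1
    ((hψ.continuousOn hfg).mono hsub)
    fun s hs τ hτ => by
      have hs' : s ∈ Icc a b := hsub hs
      have hτ' : τ ∈ Icc a b := hsub ⟨hs.1.trans hτ.1, hτ.2⟩
      have hk : IntegrableOn (fun r => F r * g r + f r * G r) (Icc a b) :=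
        (hg.continuousOn_mul (hF.continuousOn hf) isCompact_Icc).add
          (hf.mul_continuousOn (hG.continuousOn hg) isCompact_Icc)
      have hψ_sub : (∫ r in a..τ, (‖f r‖ + ‖g r‖)) - ∫ r in a..s, (‖f r‖ + ‖g r‖)
          = (∫ r in s..τ, ‖f r‖) + ∫ r in s..τ, ‖g r‖ := by
        rw [hψ.sub_eq hfg hs' hτ', integral_add (hf.intervalIntegrable_of_mem_Icc hs' hτ').norm
          (hg.intervalIntegrable_of_mem_Icc hs' hτ').norm]
      calc ‖(F τ * G τ - ∫ r in a..τ, (F r * g r + f r * G r))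
            - (F s * G s - ∫ r in a..s, (F r * g r + f r * G r))‖
          = ‖F τ * G τ - F s * G s - ∫ r in s..τ, (F r * g r + f r * G r)‖ := by
            rw [← hK.sub_eq hk hs' hτ']
            congr 1; ring
        _ ≤ 2 * ((∫ r in s..τ, ‖f r‖) * ∫ r in s..τ, ‖g r‖) :=
            hF.norm_mul_sub_mul_sub_integral_le hG hf hg hs' ⟨hτ.1, hτ'.2⟩
        _ ≤ 1 * ((∫ r in a..τ, (‖f r‖ + ‖g r‖)) - ∫ r in a..s, (‖f r‖ + ‖g r‖)) ^ 2 := by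
            rw [hψ_sub]
            nlinarith [sq_nonneg ((∫ r in s..τ, ‖f r‖) - ∫ r in s..τ, ‖g r‖)]
  simp only [integral_same, sub_zero] at hconst
  linear_combination hconst

end RCLike

end IsPrimitiveOn

theorem sub_mul_cos_le_sin_sub_sin {x y : ℝ} (hx : 0 ≤ x) (hxy : x ≤ y) (hy : y ≤ π) :
    (y - x) * cos y ≤ sin y - sin x := by
  calc (y - x) * cos y = ∫ _ in x..y, cos y := by simp
    _ ≤ ∫ z in x..y, cos z :=
      integral_mono_on hxy intervalIntegrable_const (continuous_cos.intervalIntegrable _ _)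
        fun z hz => cos_le_cos_of_nonneg_of_le_pi (hx.trans hz.1) hy hz.2
    _ = sin y - sin x := integral_cos

theorem sub_mul_sin_le_cos_sub_cos {x y : ℝ} (hx : 0 ≤ x) (hxy : x ≤ y) (hy : y ≤ π / 2) :
    (y - x) * sin x ≤ cos x - cos y := by
  calc (y - x) * sin x = ∫ _ in x..y, sin x := by simp
    _ ≤ ∫ z in x..y, sin z :=
      integral_mono_on hxy intervalIntegrable_const (continuous_sin.intervalIntegrable _ _)
        fun z hz => sin_le_sin_of_le_of_le_pi_div_two (by linarith [pi_pos]) (hz.2.trans hy) hz.1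
    _ = cos x - cos y := integral_sin

theorem mul_cos_sub_mul_sin_le {c s φ : ℝ → ℝ} {a b : ℝ} (hab : a ≤ b)
    (hφ : ContinuousOn φ (Icc a b)) (hφ_mono : MonotoneOn φ (Icc a b))
    (hφa : 0 ≤ φ a) (hφb : φ b ≤ π / 2)
    (hc : ∀ t ∈ Icc a b, 0 ≤ c t) (hs : ∀ t ∈ Icc a b, 0 ≤ s t ∧ s t ≤ 1)
    (hs_inc : ∀ r ∈ Icc a b, ∀ t ∈ Icc r b, s t ≤ s r + (φ t - φ r) * (c r + (φ t - φ r)))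
    (hc_inc : ∀ r ∈ Icc a b, ∀ t ∈ Icc r b, c r ≤ c t + (φ t - φ r) * (s r + (φ t - φ r))) :
    s b * cos (φ b) - c b * sin (φ b) ≤ s a * cos (φ a) - c a * sin (φ a) := by
  refine le_of_forall_sub_le_mul_sq (F := fun t => s t * cos (φ t) - c t * sin (φ t)) (C := 3)
    hab hφ fun r hr t ht => ?_
  have ht' : t ∈ Icc a b := ⟨hr.1.trans ht.1, ht.2⟩
  have hφr : 0 ≤ φ r := hφa.trans (hφ_mono ⟨le_rfl, hab⟩ hr hr.1)
  have hφrt : φ r ≤ φ t := hφ_mono hr ht' ht.1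
  have hφt : φ t ≤ π / 2 := (hφ_mono ht' ⟨hab, le_rfl⟩ ht.2).trans hφb
  have hδ : 0 ≤ φ t - φ r := sub_nonneg.2 hφrt
  have hsin := sub_mul_cos_le_sin_sub_sin hφr hφrt (by linarith [pi_pos])
  have hcos := sub_mul_sin_le_cos_sub_cos hφr hφrt hφt
  have hsin_lip : sin (φ t) - sin (φ r) ≤ φ t - φ r :=
    (le_abs_self _).trans ((abs_sin_sub_sin_le _ _).trans_eq (abs_of_nonneg hδ))
  have hcos_t : 0 ≤ cos (φ t) := cos_nonneg_of_mem_Icc ⟨by linarith [pi_pos], hφt⟩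
  have hsin_t : 0 ≤ sin (φ t) :=
    sin_nonneg_of_nonneg_of_le_pi (hφr.trans hφrt) (by linarith [pi_pos])
  obtain ⟨hs0, hs1⟩ := hs r hr
  nlinarith [mul_le_mul_of_nonneg_right (hs_inc r hr t ht) hcos_t,
    mul_le_mul_of_nonneg_right (hc_inc r hr t ht) hsin_t,
    mul_le_mul_of_nonneg_left hsin (hc r hr), mul_le_mul_of_nonneg_left hcos hs0,
    mul_le_mul_of_nonneg_left hsin_lip (mul_nonneg hs0 hδ),
    mul_le_mul_of_nonneg_right hs1 (sq_nonneg (φ t - φ r)),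
    mul_le_mul_of_nonneg_left (cos_le_one (φ t)) (sq_nonneg (φ t - φ r)),
    mul_le_mul_of_nonneg_left (sin_le_one (φ t)) (sq_nonneg (φ t - φ r))]

theorem cos_le_and_le_sin_of_mul_cos_le_mul_sin {c s θ : ℝ} (hc : 0 ≤ c) (hs : 0 ≤ s)
    (hcs : c ^ 2 + s ^ 2 = 1) (hθ : 0 ≤ θ) (hθ' : θ ≤ π / 2) (h : s * cos θ ≤ c * sin θ) :
    cos θ ≤ c ∧ s ≤ sin θ := by
  have hcos : 0 ≤ cos θ := cos_nonneg_of_mem_Icc ⟨by linarith [pi_pos], hθ'⟩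
  have hsin : 0 ≤ sin θ := sin_nonneg_of_nonneg_of_le_pi hθ (by linarith [pi_pos])
  have hpyth := sin_sq_add_cos_sq θ
  have hs_le : s ≤ sin θ := by
    by_contra! hlt
    rcases hcos.eq_or_lt with hcos0 | hcos_pos
    · nlinarith
    have hc_lt : c < cos θ := lt_of_pow_lt_pow_left₀ 2 hcos (by nlinarith)
    nlinarith [mul_lt_mul_of_pos_right hlt hcos_pos, mul_le_mul_of_nonneg_left hc_lt.le hsin]
  refine ⟨?_, hs_le⟩
  nlinarith [mul_le_mul hs_le hs_le hs hsin]

open Complex in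
structure IsTwoLevelSolution (E₁ E₂ : ℝ) (v : ℝ → ℝ) (T : ℝ) (x₁ x₂ : ℝ → ℂ) : Prop where
  integrableOn : IntegrableOn v (Icc 0 T)
  continuousOn₁ : ContinuousOn x₁ (Icc 0 T)
  continuousOn₂ : ContinuousOn x₂ (Icc 0 T)
  primitive₁ : IsPrimitiveOn x₁ (fun s => -I * (E₁ * x₁ s + v s * x₂ s)) 0 T
  primitive₂ : IsPrimitiveOn x₂ (fun s => -I * (E₂ * x₂ s + v s * x₁ s)) 0 T

namespace IsTwoLevelSolution

open Complex

variable {E₁ E₂ : ℝ} {v : ℝ → ℝ} {T : ℝ} {x₁ x₂ : ℝ → ℂ}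

theorem swap (h : IsTwoLevelSolution E₁ E₂ v T x₁ x₂) : IsTwoLevelSolution E₂ E₁ v T x₂ x₁ :=
  ⟨h.integrableOn, h.continuousOn₂, h.continuousOn₁, h.primitive₂, h.primitive₁⟩

theorem integrableOn_coupling_mul (h : IsTwoLevelSolution E₁ E₂ v T x₁ x₂) {g : ℝ → ℂ}
    (hg : ContinuousOn g (Icc 0 T)) : IntegrableOn (fun s => (v s : ℂ) * g s) (Icc 0 T) :=
  IntegrableOn.mul_continuousOn (Integrable.ofReal h.integrableOn) hg isCompact_Icc

theorem integrableOn_rhs (h : IsTwoLevelSolution E₁ E₂ v T x₁ x₂) :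
    IntegrableOn (fun s => -I * (E₁ * x₁ s + v s * x₂ s)) (Icc 0 T) :=
  ((h.continuousOn₁.integrableOn_Icc.const_mul _).add
    (h.integrableOn_coupling_mul h.continuousOn₂)).const_mul _

theorem norm_sq_add_norm_sq (h : IsTwoLevelSolution E₁ E₂ v T x₁ x₂) {t : ℝ}
    (ht : t ∈ Icc 0 T) : ‖x₁ t‖ ^ 2 + ‖x₂ t‖ ^ 2 = ‖x₁ 0‖ ^ 2 + ‖x₂ 0‖ ^ 2 := by
  have hconj {x f : ℝ → ℂ} (hx : IsPrimitiveOn x f 0 T) (hf : IntegrableOn f (Icc 0 T) volume) :=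
    hx.mul hx.conj hf ((RCLike.conjLIE (K := ℂ)).integrable_comp_iff.2 hf) t ht
  have e₁ := hconj h.primitive₁ h.integrableOn_rhs
  have e₂ := hconj h.primitive₂ h.swap.integrableOn_rhs
  simp only [mul_conj'] at e₁ e₂
  have hcancel : ∀ r, x₁ r * starRingEnd ℂ (-I * (E₁ * x₁ r + v r * x₂ r))
      + -I * (E₁ * x₁ r + v r * x₂ r) * starRingEnd ℂ (x₁ r)
      = -(x₂ r * starRingEnd ℂ (-I * (E₂ * x₂ r + v r * x₁ r))
      + -I * (E₂ * x₂ r + v r * x₁ r) * starRingEnd ℂ (x₂ r)) := fun r => by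
    simp only [map_mul, map_add, map_neg, conj_I, conj_ofReal]
    ring
  rw [funext hcancel, intervalIntegral.integral_neg] at e₁
  exact_mod_cast (show ((‖x₁ t‖ ^ 2 + ‖x₂ t‖ ^ 2 : ℝ) : ℂ) = ‖x₁ 0‖ ^ 2 + ‖x₂ 0‖ ^ 2 by
    push_cast; rw [e₁, e₂]; ring)

theorem isPrimitiveOn_interaction (h : IsTwoLevelSolution E₁ E₂ v T x₁ x₂) :
    IsPrimitiveOn (fun t => cexp (↑(E₁ * t) * I) * x₁ t)
      (fun t => -I * (v t * (cexp (↑(E₁ * t) * I) * x₂ t))) 0 T := by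
  have hderiv (t : ℝ) :
      HasDerivAt (fun t => cexp (↑(E₁ * t) * I)) (E₁ * I * cexp (↑(E₁ * t) * I)) t :=
    (((hasDerivAt_id t).const_mul E₁).ofReal_comp.mul_const I).cexp.congr_deriv
      (by simp only [id, mul_one]; ring)
  have hexp := IsPrimitiveOn.of_hasDerivAt (fun t _ => hderiv t)
    (Continuous.integrableOn_Icc (a := 0) (b := T) (by fun_prop))
  exact (hexp.mul h.primitive₁ (Continuous.integrableOn_Icc (by fun_prop))
    h.integrableOn_rhs).congr fun t => by ring

theorem abs_norm_sub_norm_le_mul (h : IsTwoLevelSolution E₁ E₂ v T x₁ x₂) {s t M : ℝ}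
    (hs : s ∈ Icc 0 T) (ht : t ∈ Icc s T) (hM : ∀ r ∈ Icc s t, ‖x₂ r‖ ≤ M) :
    |‖x₁ t‖ - ‖x₁ s‖| ≤ (∫ r in s..t, |v r|) * M := by
  have hcont : ContinuousOn (fun t => cexp (↑(E₁ * t) * I) * x₂ t) (Icc 0 T) :=
    (Continuous.continuousOn (by fun_prop)).mul h.continuousOn₂
  have hf : IntegrableOn (fun r => -I * (v r * (cexp (↑(E₁ * r) * I) * x₂ r))) (Icc 0 T) :=
    (h.integrableOn_coupling_mul hcont).const_mul (-I)
  have ht' : t ∈ Icc 0 T := ⟨hs.1.trans ht.1, ht.2⟩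
  have hnorm (r : ℝ) : ‖cexp (↑(E₁ * r) * I) * x₁ r‖ = ‖x₁ r‖ := by
    rw [norm_mul, norm_exp_ofReal_mul_I, one_mul]
  calc |‖x₁ t‖ - ‖x₁ s‖| = |‖cexp (↑(E₁ * t) * I) * x₁ t‖ - ‖cexp (↑(E₁ * s) * I) * x₁ s‖| := by
        rw [hnorm, hnorm]
    _ ≤ ‖cexp (↑(E₁ * t) * I) * x₁ t - cexp (↑(E₁ * s) * I) * x₁ s‖ := abs_norm_sub_norm_le _ _
    _ ≤ ∫ r in s..t, ‖-I * (v r * (cexp (↑(E₁ * r) * I) * x₂ r))‖ :=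
        h.isPrimitiveOn_interaction.norm_sub_le hf hs ht
    _ ≤ ∫ r in s..t, |v r| * M := by
        refine integral_mono_on ht.1 (hf.intervalIntegrable_of_mem_Icc hs ht').norm
          ((h.integrableOn.intervalIntegrable_of_mem_Icc hs ht').abs.mul_const M) fun r hr => ?_
        rw [norm_mul, norm_mul, norm_mul, norm_exp_ofReal_mul_I, norm_neg, norm_I, norm_real,
          Real.norm_eq_abs, one_mul, one_mul]
        exact mul_le_mul_of_nonneg_left (hM r hr) (abs_nonneg _)
    _ = (∫ r in s..t, |v r|) * M := intervalIntegral.integral_mul_const _ _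

theorem abs_norm_sub_norm_le_mul_norm_add (h : IsTwoLevelSolution E₁ E₂ v T x₁ x₂)
    (hx₁ : ∀ r ∈ Icc 0 T, ‖x₁ r‖ ≤ 1) {s t : ℝ} (hs : s ∈ Icc 0 T) (ht : t ∈ Icc s T) :
    |‖x₁ t‖ - ‖x₁ s‖| ≤ (∫ r in s..t, |v r|) * (‖x₂ s‖ + ∫ r in s..t, |v r|) := by
  refine h.abs_norm_sub_norm_le_mul hs ht fun r hr => ?_
  have hr' : r ∈ Icc s T := ⟨hr.1, hr.2.trans ht.2⟩
  have hvr : ∫ ρ in s..r, |v ρ| ≤ ∫ ρ in s..t, |v ρ| :=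
    integral_mono_interval le_rfl hr.1 hr.2 (ae_of_all _ fun _ => abs_nonneg _)
      (h.integrableOn.intervalIntegrable_of_mem_Icc hs ⟨hs.1.trans ht.1, ht.2⟩).abs
  have := h.swap.abs_norm_sub_norm_le_mul hs hr' fun ρ hρ =>
    hx₁ ρ ⟨hs.1.trans hρ.1, hρ.2.trans hr'.2⟩
  linarith [le_abs_self (‖x₂ r‖ - ‖x₂ s‖)]

theorem cos_le_norm_and_norm_le_sin (h : IsTwoLevelSolution E₁ E₂ v T x₁ x₂) (hT : 0 ≤ T)
    (hv : ∫ t in 0..T, |v t| ≤ π / 2) (h₁ : ‖x₁ 0‖ = 1) (h₂ : x₂ 0 = 0) :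
    cos (∫ t in 0..T, |v t|) ≤ ‖x₁ T‖ ∧ ‖x₂ T‖ ≤ sin (∫ t in 0..T, |v t|) := by
  have hunit (t : ℝ) (ht : t ∈ Icc 0 T) : ‖x₁ t‖ ^ 2 + ‖x₂ t‖ ^ 2 = 1 := by
    rw [h.norm_sq_add_norm_sq ht, h₁, h₂]; simp
  have hle₁ (t : ℝ) (ht : t ∈ Icc 0 T) : ‖x₁ t‖ ≤ 1 := by
    nlinarith [hunit t ht, norm_nonneg (x₁ t), norm_nonneg (x₂ t)]
  have hle₂ (t : ℝ) (ht : t ∈ Icc 0 T) : ‖x₂ t‖ ≤ 1 := by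
    nlinarith [hunit t ht, norm_nonneg (x₁ t), norm_nonneg (x₂ t)]
  have hφ := isPrimitiveOn_intervalIntegral (fun r => |v r|) 0 T
  have hincr {s t : ℝ} (hs : s ∈ Icc 0 T) (ht : t ∈ Icc 0 T) :=
    hφ.sub_eq h.integrableOn.abs hs ht
  have hrot := mul_cos_sub_mul_sin_le (c := fun t => ‖x₁ t‖) (s := fun t => ‖x₂ t‖) hT
    (hφ.continuousOn h.integrableOn.abs)
    (fun s hs t ht hst => by
      rw [← sub_nonneg, hincr hs ht]; exact integral_nonneg hst fun _ _ => abs_nonneg _)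
    (by simp) hv (fun _ _ => norm_nonneg _) (fun t ht => ⟨norm_nonneg _, hle₂ t ht⟩)
    (fun r hr t ht => by
      rw [hincr hr ⟨hr.1.trans ht.1, ht.2⟩]
      linarith [le_abs_self (‖x₂ t‖ - ‖x₂ r‖), h.swap.abs_norm_sub_norm_le_mul_norm_add hle₂ hr ht])
    (fun r hr t ht => by
      rw [hincr hr ⟨hr.1.trans ht.1, ht.2⟩]
      linarith [neg_abs_le (‖x₁ t‖ - ‖x₁ r‖), h.abs_norm_sub_norm_le_mul_norm_add hle₁ hr ht])
  simp only [integral_same, Real.cos_zero, Real.sin_zero, h₂, norm_zero] at hrot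
  exact cos_le_and_le_sin_of_mul_cos_le_mul_sin (norm_nonneg _) (norm_nonneg _)
    (hunit T ⟨hT, le_rfl⟩) (integral_nonneg hT fun _ _ => abs_nonneg _) hv (by linarith)

end IsTwoLevelSolution

/-- Lower bound on the population of the first level (and upper bound on the
second) for the two-level Galerkin approximation of the planar molecule, in
terms of the `L¹` norm of the control. -/
theorem two_level_population_bounds
    (T : ℝ) (hT : 0 < T)
    (u : ℝ → ℝ) (hu_int : IntegrableOn u (Set.Icc 0 T))
    (hu_pi : (∫ t in (0 : ℝ)..T, |u t|) < π)
    (x₁ x₂ : ℝ → ℂ) (hx₁_cont : Continuous x₁) (hx₂_cont : Continuous x₂)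
    (hx₁ : ∀ t ∈ Set.Icc (0 : ℝ) T,
      x₁ t = x₁ 0 + ∫ s in (0 : ℝ)..t,
        (-Complex.I * x₁ s - (Complex.I / 2) * (u s : ℂ) * x₂ s))
    (hx₂ : ∀ t ∈ Set.Icc (0 : ℝ) T,
      x₂ t = x₂ 0 + ∫ s in (0 : ℝ)..t,
        (-4 * Complex.I * x₂ s - (Complex.I / 2) * (u s : ℂ) * x₁ s))
    (hinit₁ : x₁ 0 = 1) (hinit₂ : x₂ 0 = 0) :
    Real.cos ((∫ t in (0 : ℝ)..T, |u t|) / 2) ≤ ‖x₁ T‖ ∧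
    ‖x₂ T‖ ≤ Real.sin ((∫ t in (0 : ℝ)..T, |u t|) / 2) := by
  have h : IsTwoLevelSolution 1 4 (fun t => u t / 2) T x₁ x₂ :=
    { integrableOn := hu_int.div_const 2
      continuousOn₁ := hx₁_cont.continuousOn
      continuousOn₂ := hx₂_cont.continuousOn
      primitive₁ := IsPrimitiveOn.congr hx₁ fun s => by push_cast; ring
      primitive₂ := IsPrimitiveOn.congr hx₂ fun s => by push_cast; ring }
  have hv : ∫ t in (0 : ℝ)..T, |u t / 2| = (∫ t in (0 : ℝ)..T, |u t|) / 2 := by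
    simp only [abs_div, abs_two, intervalIntegral.integral_div]
  rw [← hv]
  exact h.cos_le_norm_and_norm_le_sin hT.le (by rw [hv]; linarith) (by simp [hinit₁]) hinit₂
end

section
/- For every ε > 0 there exist T > 0, an integrable control u : ℝ → ℝ with ∫₀ᵀ |u(t)| dt ≤ π + ε, and continuous functions x₁, x₂ : ℝ → ℂ satisfying, for all t ∈ [0,T], x₁(t) = 1 + ∫₀ᵗ (−i·x₁(s) − (i/2)·u(s)·x₂(s)) ds and x₂(t) = ∫₀ᵗ (−4i·x₂(s) − (i/2)·u(s)·x₁(s)) ds, such that |x₂(T)| ≥ 1 − ε. -/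
/-!
Under a constant control `u ≡ 2b` the two-level system is autonomous, and its solution from the
first level is a Rabi oscillation of frequency `Ω = √(b² + 9/4)`. At `T = π / (2Ω)`, where
`sin (Ω T) = 1`, the second level carries amplitude `b / Ω`, while the control has cost
`2b · T = π b / Ω ≤ π`. Letting `b → ∞` (a short strong pulse) makes `b / Ω` tend to `1`.
-/

open MeasureTheory intervalIntegral Real

theorem eq_add_integral_of_hasDerivAt {E : Type*} [NormedAddCommGroup E] [NormedSpace ℝ E]
    [CompleteSpace E] {f f' : ℝ → E} (hf : ∀ t, HasDerivAt f (f' t) t) (hf' : Continuous f')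
    (t : ℝ) : f t = f 0 + ∫ s in (0 : ℝ)..t, f' s := by
  rw [integral_eq_sub_of_hasDerivAt (fun s _ => hf s) (hf'.intervalIntegrable 0 t)]
  abel

theorem hasDerivAt_ofReal_cos_mul (ω t : ℝ) :
    HasDerivAt (fun y : ℝ => (Real.cos (ω * y) : ℂ)) (-ω * Real.sin (ω * t)) t := by
  refine (((hasDerivAt_id' t).const_mul ω).cos.ofReal_comp).congr_deriv ?_
  push_cast
  ring

theorem hasDerivAt_ofReal_sin_mul (ω t : ℝ) :
    HasDerivAt (fun y : ℝ => (Real.sin (ω * y) : ℂ)) (ω * Real.cos (ω * t)) t := by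
  refine (((hasDerivAt_id' t).const_mul ω).sin.ofReal_comp).congr_deriv ?_
  push_cast
  ring

namespace TwoLevel

variable (E₁ E₂ b : ℝ)

noncomputable def rabiFreq : ℝ := √(b ^ 2 + ((E₂ - E₁) / 2) ^ 2)

noncomputable def phase (t : ℝ) : ℂ := Complex.exp (↑(-((E₁ + E₂) / 2) * t) * Complex.I)

/- The solution of `x₁' = -i E₁ x₁ - i b x₂`, `x₂' = -i E₂ x₂ - i b x₁` with `x(0) = (1, 0)`:
the Hamiltonian `[[E₁, b], [b, E₂]]` has eigenvalues `(E₁ + E₂) / 2 ± rabiFreq`. -/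
noncomputable def rabi₁ (t : ℝ) : ℂ :=
  phase E₁ E₂ t * (rabiFreq E₁ E₂ b * Real.cos (rabiFreq E₁ E₂ b * t) +
    Complex.I * ((E₂ - E₁) / 2 : ℝ) * Real.sin (rabiFreq E₁ E₂ b * t)) / rabiFreq E₁ E₂ b

noncomputable def rabi₂ (t : ℝ) : ℂ :=
  phase E₁ E₂ t * (-Complex.I * b * Real.sin (rabiFreq E₁ E₂ b * t)) / rabiFreq E₁ E₂ b

theorem rabiFreq_sq : rabiFreq E₁ E₂ b ^ 2 = b ^ 2 + ((E₂ - E₁) / 2) ^ 2 :=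
  sq_sqrt (by positivity)

theorem abs_le_rabiFreq : |b| ≤ rabiFreq E₁ E₂ b :=
  Real.abs_le_sqrt (le_add_of_nonneg_right (sq_nonneg _))

theorem rabiFreq_pos (hb : b ≠ 0) : 0 < rabiFreq E₁ E₂ b :=
  Real.sqrt_pos.2 (by positivity)

theorem div_rabiFreq_le_one (hb : b ≠ 0) : b / rabiFreq E₁ E₂ b ≤ 1 :=
  (div_le_one (rabiFreq_pos E₁ E₂ b hb)).2 ((le_abs_self b).trans (abs_le_rabiFreq E₁ E₂ b))

theorem norm_phase (t : ℝ) : ‖phase E₁ E₂ t‖ = 1 :=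
  Complex.norm_exp_ofReal_mul_I _

theorem hasDerivAt_phase (t : ℝ) :
    HasDerivAt (phase E₁ E₂) (-Complex.I * ↑((E₁ + E₂) / 2) * phase E₁ E₂ t) t := by
  refine ((((hasDerivAt_id t).const_mul (-((E₁ + E₂) / 2))).ofReal_comp.mul_const
    Complex.I).cexp).congr_deriv ?_
  simp only [phase, id, mul_one]
  push_cast
  ring

theorem hasDerivAt_rabi₁ (t : ℝ) :
    HasDerivAt (rabi₁ E₁ E₂ b)
      (-Complex.I * E₁ * rabi₁ E₁ E₂ b t - Complex.I * b * rabi₂ E₁ E₂ b t) t := by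
  refine (((hasDerivAt_phase E₁ E₂ t).fun_mul
    (((hasDerivAt_ofReal_cos_mul _ t).const_mul (rabiFreq E₁ E₂ b : ℂ)).fun_add
      ((hasDerivAt_ofReal_sin_mul _ t).const_mul (Complex.I * ((E₂ - E₁) / 2 : ℝ))))).div_const
    (rabiFreq E₁ E₂ b : ℂ)).congr_deriv ?_
  have hΩ : (rabiFreq E₁ E₂ b : ℂ) ^ 2 = b ^ 2 + ((E₂ - E₁) / 2) ^ 2 := by
    exact_mod_cast rabiFreq_sq E₁ E₂ b
  simp only [rabi₁, rabi₂]
  push_cast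
  linear_combination (-(phase E₁ E₂ t) * Complex.sin (rabiFreq E₁ E₂ b * t) / rabiFreq E₁ E₂ b) *
      hΩ - (phase E₁ E₂ t * Complex.sin (rabiFreq E₁ E₂ b * t) / rabiFreq E₁ E₂ b *
      (b ^ 2 + ((E₂ - E₁) / 2) ^ 2)) * Complex.I_sq

theorem hasDerivAt_rabi₂ (t : ℝ) :
    HasDerivAt (rabi₂ E₁ E₂ b)
      (-Complex.I * E₂ * rabi₂ E₁ E₂ b t - Complex.I * b * rabi₁ E₁ E₂ b t) t := by
  refine (((hasDerivAt_phase E₁ E₂ t).fun_mul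
    ((hasDerivAt_ofReal_sin_mul _ t).const_mul (-Complex.I * b))).div_const
    (rabiFreq E₁ E₂ b : ℂ)).congr_deriv ?_
  simp only [rabi₁, rabi₂]
  push_cast
  ring

theorem continuous_rabi₁ : Continuous (rabi₁ E₁ E₂ b) :=
  continuous_iff_continuousAt.2 fun t => (hasDerivAt_rabi₁ E₁ E₂ b t).continuousAt

theorem continuous_rabi₂ : Continuous (rabi₂ E₁ E₂ b) :=
  continuous_iff_continuousAt.2 fun t => (hasDerivAt_rabi₂ E₁ E₂ b t).continuousAt

theorem rabi₁_zero (hΩ : rabiFreq E₁ E₂ b ≠ 0) : rabi₁ E₁ E₂ b 0 = 1 := by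
  simp [rabi₁, phase, hΩ]

theorem rabi₂_zero : rabi₂ E₁ E₂ b 0 = 0 := by
  simp [rabi₂]

theorem norm_rabi₂_quarter_period (hΩ : rabiFreq E₁ E₂ b ≠ 0) :
    ‖rabi₂ E₁ E₂ b (π / (2 * rabiFreq E₁ E₂ b))‖ = |b| / rabiFreq E₁ E₂ b := by
  have hsin : Real.sin (rabiFreq E₁ E₂ b * (π / (2 * rabiFreq E₁ E₂ b))) = 1 := by
    rw [← Real.sin_pi_div_two]
    congr 1
    field_simp
  rw [rabi₂, hsin, norm_div, norm_mul, norm_phase]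
  simp [abs_of_nonneg (Real.sqrt_nonneg _), rabiFreq]

theorem exists_one_sub_le_div_rabiFreq {ε : ℝ} (hε : 0 < ε) :
    ∃ b > 0, 1 - ε ≤ b / rabiFreq E₁ E₂ b := by
  obtain ⟨b, hb, hbδ⟩ : ∃ b > 0, ((E₂ - E₁) / 2) ^ 2 ≤ ε * b ^ 2 := by
    refine ⟨√(((E₂ - E₁) / 2) ^ 2 / ε) + 1, by positivity, ?_⟩
    rw [← div_le_iff₀' hε]
    nlinarith [Real.sq_sqrt (by positivity : 0 ≤ ((E₂ - E₁) / 2) ^ 2 / ε),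
      Real.sqrt_nonneg (((E₂ - E₁) / 2) ^ 2 / ε)]
  have hΩ := rabiFreq_pos E₁ E₂ b hb.ne'
  have hle := div_rabiFreq_le_one E₁ E₂ b hb.ne'
  refine ⟨b, hb, ?_⟩
  calc 1 - ε ≤ (b / rabiFreq E₁ E₂ b) ^ 2 := by
        rw [div_pow, rabiFreq_sq, le_div_iff₀ (by positivity)]
        nlinarith
    _ ≤ b / rabiFreq E₁ E₂ b := by
        nlinarith [div_pos hb hΩ]

end TwoLevel

/-- Upper-bound half of `𝒞₁(φ₁,φ₂) = π` for the two-level Galerkin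
approximation of the planar molecule: the eigenstate transfer can be achieved
with arbitrary precision by controls of `L¹`-norm arbitrarily close to `π`. -/
theorem two_level_transfer_L1_upper_bound :
    ∀ ε > (0 : ℝ), ∃ T > (0 : ℝ), ∃ u : ℝ → ℝ,
      IntegrableOn u (Set.Icc 0 T) ∧
      (∫ t in (0 : ℝ)..T, |u t|) ≤ π + ε ∧
      ∃ x₁ x₂ : ℝ → ℂ, Continuous x₁ ∧ Continuous x₂ ∧
        (∀ t ∈ Set.Icc (0 : ℝ) T,
          x₁ t = 1 + ∫ s in (0 : ℝ)..t,
            (-Complex.I * x₁ s - (Complex.I / 2) * (u s : ℂ) * x₂ s)) ∧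
        (∀ t ∈ Set.Icc (0 : ℝ) T,
          x₂ t = ∫ s in (0 : ℝ)..t,
            (-4 * Complex.I * x₂ s - (Complex.I / 2) * (u s : ℂ) * x₁ s)) ∧
        1 - ε ≤ ‖x₂ T‖ := by
  intro ε hε
  obtain ⟨b, hb, hratio⟩ := TwoLevel.exists_one_sub_le_div_rabiFreq 1 4 hε
  have hΩ := TwoLevel.rabiFreq_pos 1 4 b hb.ne'
  have hcont₁ := TwoLevel.continuous_rabi₁ 1 4 b
  have hcont₂ := TwoLevel.continuous_rabi₂ 1 4 b
  refine ⟨π / (2 * TwoLevel.rabiFreq 1 4 b), by positivity, fun _ => 2 * b,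
    integrableOn_const measure_Icc_lt_top.ne, ?_, _, _, hcont₁, hcont₂, fun t _ => ?_,
    fun t _ => ?_, ?_⟩
  · calc (∫ _ in (0 : ℝ)..π / (2 * TwoLevel.rabiFreq 1 4 b), |2 * b|)
        = π * (b / TwoLevel.rabiFreq 1 4 b) := by
          rw [intervalIntegral.integral_const, smul_eq_mul, abs_of_pos (by positivity)]
          field_simp
          ring
      _ ≤ π + ε := by nlinarith [pi_pos, TwoLevel.div_rabiFreq_le_one 1 4 b hb.ne']
  · rw [eq_add_integral_of_hasDerivAt (TwoLevel.hasDerivAt_rabi₁ 1 4 b) (by fun_prop) t,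
      TwoLevel.rabi₁_zero 1 4 b hΩ.ne']
    congr 2 with s
    push_cast
    ring
  · rw [eq_add_integral_of_hasDerivAt (TwoLevel.hasDerivAt_rabi₂ 1 4 b) (by fun_prop) t,
      TwoLevel.rabi₂_zero, zero_add]
    congr 1 with s
    push_cast
    ring
  · rw [TwoLevel.norm_rabi₂_quarter_period 1 4 b hΩ.ne', abs_of_pos hb]
    exact hratio
end
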